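/- If Γ_D is bipartite and for every prime pair (i,j) of D the total number of directed paths from i to j, namely ∑_{m≥1} ((B−I)^m)_{i,j}, is at most 2, then B is signable. -/

import Mathlib

open Matrix

/-- A square integer matrix `M` is *signable* if there is a signing vector `s`
(valued in `{+1, -1}`) with `s i * M i j * s j = |M i j|` for all `i, j`. -/
def IsSignable {k : ℕ} (M : Matrix (Fin k) (Fin k) ℤ) : Prop :=
  ∃ s : Fin k → ℤ, (∀ i, s i = 1 ∨ s i = -1) ∧ ∀ i j, s i * M i j * s j = |M i j|

/-- `{i, j}` is an edge of the maximal-path subgraph `Γ_D` of the digraph `D` with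
adjacency matrix `B - 1`: there is an edge from `i` to `j` and no directed path
of length `≥ 2` from `i` to `j`. -/
def GammaEdge {k : ℕ} (B : Matrix (Fin k) (Fin k) ℤ) (i j : Fin k) : Prop :=
  i < j ∧ 1 ≤ B i j ∧ ∀ m : ℕ, 2 ≤ m → ((B - 1) ^ m) i j = 0

/-- The maximal-path subgraph `Γ_D` is bipartite. -/
def GammaBipartite {k : ℕ} (B : Matrix (Fin k) (Fin k) ℤ) : Prop :=
  ∃ c : Fin k → Bool, ∀ i j : Fin k, GammaEdge B i j → c i ≠ c j

open Classical in
/-- The pairing `⟨i,j⟩`: it is `1` on the diagonal, `(-1)^ℓ(i,j)` where `ℓ(i,j)` is the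
length of a longest directed path from `i` to `j` when such a path exists, and `0`
otherwise. -/
noncomputable def pairing {k : ℕ} (B : Matrix (Fin k) (Fin k) ℤ) (i j : Fin k) : ℤ :=
  if i = j then 1
  else if ∃ m : ℕ, 1 ≤ m ∧ ((B - 1) ^ m) i j ≠ 0 then
    (-1 : ℤ) ^ sSup {m : ℕ | 1 ≤ m ∧ ((B - 1) ^ m) i j ≠ 0}
  else 0

/-- `B⁽ᵛ⁾`: the matrix obtained from `B` by replacing every off-diagonal entry in row
`v` and in column `v` by `0` (deleting the vertex `v` from the digraph). -/
def vertexDelete {k : ℕ} (B : Matrix (Fin k) (Fin k) ℤ) (v : Fin k) :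
    Matrix (Fin k) (Fin k) ℤ :=
  Matrix.of fun i j => if i ≠ j ∧ (i = v ∨ j = v) then 0 else B i j

/-- `(i,j)` is a zero pair: no directed path from `i` to `j`. -/
def ZeroPair {k : ℕ} (B : Matrix (Fin k) (Fin k) ℤ) (i j : Fin k) : Prop :=
  ∀ m : ℕ, 1 ≤ m → ((B - 1) ^ m) i j = 0

/-- `(i,j)` is a unit pair: all directed paths from `i` to `j` have length one. -/
def UnitPair {k : ℕ} (B : Matrix (Fin k) (Fin k) ℤ) (i j : Fin k) : Prop :=
  1 ≤ B i j ∧ ∀ m : ℕ, 2 ≤ m → ((B - 1) ^ m) i j = 0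

/-- `(i,j)` is a composite pair: every directed path from `i` to `j` passes through
some fixed intermediate vertex `v`. -/
def CompositePair {k : ℕ} (B : Matrix (Fin k) (Fin k) ℤ) (i j : Fin k) : Prop :=
  ∃ v : Fin k, i < v ∧ v < j ∧ ∀ m : ℕ, 1 ≤ m → ((vertexDelete B v - 1) ^ m) i j = 0

/-- `(i,j)` is a prime pair: `i < j` and `(i,j)` is neither a zero pair, a unit pair,
nor a composite pair. -/
def PrimePair {k : ℕ} (B : Matrix (Fin k) (Fin k) ℤ) (i j : Fin k) : Prop :=
  i < j ∧ ¬ZeroPair B i j ∧ ¬UnitPair B i j ∧ ¬CompositePair B i j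

/-!
Write `N = B - 1`. As `N` is strictly upper triangular, `B⁻¹ = ∑ₘ (-N)ᵐ`, so for `i ≠ j` the
entry `B⁻¹ i j` is the alternating count `∑ₘ (-1)ᵐ (Nᵐ) i j` of the paths from `i` to `j`.
Let `s` be the `±1` vector of a 2-colouring of `Γ_D`; we show `0 ≤ s i * B⁻¹ i j * s j` by
induction on `j - i`.

If every path from `i` to `j` passes through `v`, then `B⁻¹ i j = B⁻¹ i v * B⁻¹ v j`, because
the `(i, j)` entry of the inverse of `B⁽ᵛ⁾` vanishes, and induction applies to both factors.
Otherwise every edge of a longest path, of length `ℓ`, is an edge of `Γ_D`, so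
`s i * s j = (-1) ^ ℓ`; and when there are at most two paths, or all paths are single edges,
the alternating count has the sign of `(-1) ^ ℓ`.
-/

open Finset

namespace Matrix

section StrictlyUpper

variable {n : ℕ} {N : Matrix (Fin n) (Fin n) ℤ}

theorem add_le_of_pow_apply_ne_zero (hN : ∀ x y, N x y ≠ 0 → x < y) :
    ∀ {m : ℕ} {x y : Fin n}, (N ^ m) x y ≠ 0 → (x : ℕ) + m ≤ y
  | 0, x, y, h => by
    obtain rfl : x = y := by
      by_contra hxy
      exact h (one_apply_ne hxy)
    simp
  | m + 1, x, y, h => by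
    rw [pow_succ, mul_apply] at h
    obtain ⟨k, -, hk⟩ := exists_ne_zero_of_sum_ne_zero h
    have hxk := add_le_of_pow_apply_ne_zero hN (left_ne_zero_of_mul hk)
    have hky : (k : ℕ) < y := hN k y (right_ne_zero_of_mul hk)
    omega

theorem pow_apply_eq_zero_of_lt_add (hN : ∀ x y, N x y ≠ 0 → x < y) {m : ℕ} {x y : Fin n}
    (h : (y : ℕ) < x + m) : (N ^ m) x y = 0 := by
  by_contra hne
  have := add_le_of_pow_apply_ne_zero hN hne
  omega

theorem pow_eq_zero_of_le (hN : ∀ x y, N x y ≠ 0 → x < y) {m : ℕ} (hm : n ≤ m) : N ^ m = 0 := by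
  ext x y
  exact pow_apply_eq_zero_of_lt_add hN (by omega)

theorem exists_longest_of_pow_apply_ne_zero (hN : ∀ x y, N x y ≠ 0 → x < y) {m : ℕ}
    {x y : Fin n} (hm : (N ^ m) x y ≠ 0) :
    ∃ L, m ≤ L ∧ L ≤ n ∧ (N ^ L) x y ≠ 0 ∧ ∀ k, L < k → (N ^ k) x y = 0 := by
  classical
  have hmn : m ≤ n := by
    have := add_le_of_pow_apply_ne_zero hN hm
    omega
  let P : ℕ → Prop := fun k => (N ^ k) x y ≠ 0
  refine ⟨Nat.findGreatest P n, Nat.le_findGreatest hmn hm, Nat.findGreatest_le n,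
    Nat.findGreatest_spec (P := P) hmn hm, fun k hk => ?_⟩
  by_cases hkn : k ≤ n
  · simpa [P] using Nat.findGreatest_is_greatest hk hkn
  · exact pow_apply_eq_zero_of_lt_add hN (by omega)

end StrictlyUpper

theorem inv_apply_eq_add_mul_of_col_eq_one_apply {ι R : Type*} [Fintype ι] [DecidableEq ι]
    [CommRing R] {B B' A A' : Matrix ι ι R} {v : ι} (hA : B * A = 1) (hA' : A' * B' = 1)
    (hBB' : ∀ x y, x ≠ v → y ≠ v → B x y = B' x y) (hcol : ∀ x, B' x v = (1 : Matrix ι ι R) x v)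
    (hvv : A v v = 1) {i : ι} (hi : i ≠ v) (j : ι) :
    A i j = A' i j + A i v * A v j := by
  have hA'v : A' i v = 0 := by
    have h := congrFun (congrFun hA' i) v
    rwa [mul_apply, sum_eq_single v (fun k _ hk => by rw [hcol, one_apply_ne hk, mul_zero])
      (by simp), hcol, one_apply_eq, mul_one, one_apply_ne hi] at h
  set c := (A' * B) i v
  have hrow : ∀ k, (A' * B) i k = (1 : Matrix ι ι R) i k + c * (1 : Matrix ι ι R) v k := by
    intro k
    by_cases hk : k = v
    · subst hk
      simp [c, one_apply_ne hi]
    · rw [one_apply_ne (Ne.symm hk), mul_zero, add_zero, ← hA', mul_apply, mul_apply]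
      refine sum_congr rfl fun l _ => ?_
      by_cases hl : l = v
      · simp [hl, hA'v]
      · rw [hBB' l k hl hk]
  have hA'A : ∀ j, A' i j = A i j + c * A v j := fun j => calc
    A' i j = (A' * B * A) i j := by rw [Matrix.mul_assoc, hA, Matrix.mul_one]
    _ = ∑ k, ((1 : Matrix ι ι R) i k + c * (1 : Matrix ι ι R) v k) * A k j :=
      sum_congr rfl fun k _ => congrArg (· * A k j) (hrow k)
    _ = A i j + c * A v j := by simp [add_mul, sum_add_distrib, one_apply]
  have hc := hA'A v
  rw [hA'v, hvv] at hc
  linear_combination -hA'A j + A v j * hc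

section Unitriangular

variable {n : ℕ} {B : Matrix (Fin n) (Fin n) ℤ}

theorem lt_of_sub_one_apply_ne_zero (hdiag : ∀ i, B i i = 1)
    (hlower : ∀ i j, j < i → B i j = 0) {x y : Fin n} (h : (B - 1) x y ≠ 0) : x < y := by
  rcases lt_trichotomy x y with hxy | rfl | hyx
  · exact hxy
  · simp [hdiag] at h
  · simp [hlower x y hyx, one_apply_ne hyx.ne'] at h

theorem sub_one_apply_nonneg (hdiag : ∀ i, B i i = 1) (hlower : ∀ i j, j < i → B i j = 0)
    (hupper : ∀ i j, i < j → 0 ≤ B i j) (x y : Fin n) : 0 ≤ (B - 1) x y := by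
  rcases lt_trichotomy x y with hxy | rfl | hyx
  · simpa [one_apply_ne hxy.ne] using hupper x y hxy
  · simp [hdiag]
  · simp [one_apply_ne hyx.ne', hlower x y hyx]

theorem isUnit_det_of_unitriangular (hdiag : ∀ i, B i i = 1)
    (hlower : ∀ i j, j < i → B i j = 0) : IsUnit B.det := by
  rw [det_of_isUpperTriangular fun i j h => hlower i j h]
  simp [hdiag]

theorem inv_apply_eq_one_apply_add_sum (hdiag : ∀ i, B i i = 1)
    (hlower : ∀ i j, j < i → B i j = 0) (i j : Fin n) :
    B⁻¹ i j = (1 : Matrix (Fin n) (Fin n) ℤ) i j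
      + ∑ m ∈ Icc 1 n, (-1) ^ m * ((B - 1) ^ m) i j := by
  have hnil : (B - 1) ^ (n + 1) = 0 :=
    pow_eq_zero_of_le (fun _ _ h => lt_of_sub_one_apply_ne_zero hdiag hlower h) n.le_succ
  have hinv : B⁻¹ = ∑ m ∈ range (n + 1), (-(B - 1)) ^ m := by
    apply inv_eq_right_inv
    have h := mul_neg_geom_sum (-(B - 1)) (n + 1)
    rwa [neg_pow, hnil, mul_zero, sub_zero, sub_neg_eq_add, add_sub_cancel] at h
  rw [hinv, sum_apply, range_eq_Ico, sum_eq_sum_Ico_succ_bot (by omega : 0 < n + 1),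
    zero_add, Ico_add_one_right_eq_Icc]
  simp only [← neg_one_smul ℤ (B - 1), smul_pow, smul_apply, smul_eq_mul, pow_zero]

theorem sum_pow_apply_eq_zero_of_le (hdiag : ∀ i, B i i = 1)
    (hlower : ∀ i j, j < i → B i j = 0) {i j : Fin n} (hji : j ≤ i) :
    ∑ m ∈ Icc 1 n, (-1) ^ m * ((B - 1) ^ m) i j = 0 := by
  refine sum_eq_zero fun m hm => ?_
  rw [pow_apply_eq_zero_of_lt_add (fun _ _ h => lt_of_sub_one_apply_ne_zero hdiag hlower h),
    mul_zero]
  have : (j : ℕ) ≤ i := hji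
  have := (mem_Icc.mp hm).1
  omega

theorem inv_apply_eq_mul_of_vertexDelete (hdiag : ∀ i, B i i = 1)
    (hlower : ∀ i j, j < i → B i j = 0) {i j v : Fin n} (hiv : i ≠ v) (hij : i ≠ j)
    (hz : ∀ m, 1 ≤ m → ((vertexDelete B v - 1) ^ m) i j = 0) :
    B⁻¹ i j = B⁻¹ i v * B⁻¹ v j := by
  have hdiag' : ∀ x, vertexDelete B v x x = 1 := by simp [vertexDelete, hdiag]
  have hlower' : ∀ x y, y < x → vertexDelete B v x y = 0 := fun x y h => by
    simp [vertexDelete, hlower x y h]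
  have hA' : (vertexDelete B v)⁻¹ i j = 0 := by
    rw [inv_apply_eq_one_apply_add_sum hdiag' hlower', one_apply_ne hij, zero_add]
    exact sum_eq_zero fun m hm => by rw [hz m (mem_Icc.mp hm).1, mul_zero]
  have hvv : B⁻¹ v v = 1 := by
    rw [inv_apply_eq_one_apply_add_sum hdiag hlower,
      sum_pow_apply_eq_zero_of_le hdiag hlower le_rfl, one_apply_eq, add_zero]
  have key := inv_apply_eq_add_mul_of_col_eq_one_apply
    (mul_nonsing_inv B (isUnit_det_of_unitriangular hdiag hlower))
    (nonsing_inv_mul _ (isUnit_det_of_unitriangular hdiag' hlower'))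
    (fun x y hx hy => by simp [vertexDelete, hx, hy])
    (fun x => by by_cases hx : x = v <;> simp [vertexDelete, one_apply, hx, hdiag]) hvv hiv j
  rw [key, hA', zero_add]

end Unitriangular

section LongestPath

variable {ι : Type*} [Fintype ι] [DecidableEq ι] {N : Matrix ι ι ℤ}

theorem one_le_pow_apply_of_ne_zero (hN : ∀ x y, 0 ≤ N x y) {m : ℕ} {x y : ι}
    (h : (N ^ m) x y ≠ 0) : 1 ≤ (N ^ m) x y := by
  have := pow_apply_nonneg hN m x y
  omega

theorem one_le_pow_add_apply (hN : ∀ x y, 0 ≤ N x y) {a b : ℕ} {x y z : ι}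
    (ha : 1 ≤ (N ^ a) x y) (hb : 1 ≤ (N ^ b) y z) : 1 ≤ (N ^ (a + b)) x z := by
  rw [pow_add, mul_apply]
  calc (1 : ℤ) ≤ (N ^ a) x y * (N ^ b) y z := one_le_mul_of_one_le_of_one_le ha hb
    _ ≤ _ := single_le_sum (f := fun k => (N ^ a) x k * (N ^ b) k z)
      (fun k _ => mul_nonneg (pow_apply_nonneg hN a x k) (pow_apply_nonneg hN b k z))
      (mem_univ y)

/-- Every edge of a longest path is an edge of `Γ_D`: an edge with a detour of length `r ≥ 2`
could be replaced by that detour. -/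
theorem mul_eq_neg_one_pow_of_longest (hN : ∀ x y, 0 ≤ N x y) {s : ι → ℤ}
    (hsq : ∀ x, s x * s x = 1)
    (hΓ : ∀ x y, 1 ≤ N x y → (∀ r, 2 ≤ r → (N ^ r) x y = 0) → s x * s y = -1) :
    ∀ {L : ℕ} {x y : ι}, 1 ≤ (N ^ L) x y → (∀ m, L < m → (N ^ m) x y = 0) →
      s x * s y = (-1) ^ L
  | 0, x, y, h, _ => by
    obtain rfl : x = y := by
      by_contra hxy
      simp [one_apply_ne hxy] at h
    simp [hsq]
  | L + 1, x, y, h, hmax => by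
    rw [pow_succ, mul_apply] at h
    obtain ⟨k, -, hk⟩ := exists_ne_zero_of_sum_ne_zero (one_pos.trans_le h).ne'
    have hxk := one_le_pow_apply_of_ne_zero hN (left_ne_zero_of_mul hk)
    have hky : 1 ≤ N k y := by
      simpa using one_le_pow_apply_of_ne_zero hN (m := 1)
        (by simpa using right_ne_zero_of_mul hk)
    have h₁ : s x * s k = (-1) ^ L := mul_eq_neg_one_pow_of_longest hN hsq hΓ hxk fun m hm => by
      by_contra hne
      have := one_le_pow_add_apply hN (one_le_pow_apply_of_ne_zero hN hne) (b := 1)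
        (by simpa using hky)
      have := hmax (m + 1) (by omega)
      omega
    have h₂ : s k * s y = -1 := hΓ k y hky fun r hr => by
      by_contra hne
      have := one_le_pow_add_apply hN hxk (one_le_pow_apply_of_ne_zero hN hne)
      have := hmax (L + r) (by omega)
      omega
    linear_combination (s x * s k) * h₂ + h₁ * (-1 : ℤ) + (-(s x * s y)) * hsq k

end LongestPath

end Matrix

theorem neg_one_pow_mul_alternating_sum_nonneg {S : Finset ℕ} {p : ℕ → ℤ} {L : ℕ}
    (hp : ∀ m ∈ S, 0 ≤ p m) (hL : L ∈ S) (hpL : 1 ≤ p L) (hsum : ∑ m ∈ S, p m ≤ 2) :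
    0 ≤ (-1) ^ L * ∑ m ∈ S, (-1) ^ m * p m := by
  have hrest : -∑ m ∈ S.erase L, p m ≤ ∑ m ∈ S.erase L, (-1) ^ L * ((-1) ^ m * p m) := by
    rw [← sum_neg_distrib]
    refine sum_le_sum fun m hm => ?_
    have := hp m (mem_of_mem_erase hm)
    rw [← mul_assoc, ← pow_add]
    rcases neg_one_pow_eq_or ℤ (L + m) with h | h <;> rw [h] <;> linarith
  have hLL : (-1 : ℤ) ^ L * ((-1) ^ L * p L) = p L := by
    rw [← mul_assoc, ← pow_add, ← two_mul, pow_mul]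
    simp
  rw [← add_sum_erase S _ hL, mul_add, mul_sum, hLL]
  rw [← add_sum_erase S p hL] at hsum
  linarith

theorem mul_mul_eq_abs_of_nonneg {R : Type*} [Ring R] [LinearOrder R] [IsOrderedRing R]
    {ε δ a : R} (hε : ε = 1 ∨ ε = -1) (hδ : δ = 1 ∨ δ = -1) (h : 0 ≤ ε * a * δ) :
    ε * a * δ = |a| := by
  rw [← abs_of_nonneg h]
  rcases hε with rfl | rfl <;> rcases hδ with rfl | rfl <;> simp

section Signing

variable {n : ℕ} {B : Matrix (Fin n) (Fin n) ℤ} {s : Fin n → ℤ}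

theorem signed_inv_apply_nonneg_of_not_compositePair (hdiag : ∀ i, B i i = 1)
    (hlower : ∀ i j, j < i → B i j = 0) (hupper : ∀ i j, i < j → 0 ≤ B i j)
    (hsq : ∀ x, s x * s x = 1) (hΓ : ∀ i j, GammaEdge B i j → s i * s j = -1)
    (hpaths : ∀ i j, PrimePair B i j → ∑ m ∈ Icc 1 n, ((B - 1) ^ m) i j ≤ 2) {i j : Fin n}
    (hij : i < j) (hcomp : ¬CompositePair B i j) :
    0 ≤ s i * B⁻¹ i j * s j := by
  have hlt : ∀ x y, (B - 1) x y ≠ 0 → x < y := fun x y =>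
    lt_of_sub_one_apply_ne_zero hdiag hlower
  have hN := sub_one_apply_nonneg hdiag hlower hupper
  have hA := inv_apply_eq_one_apply_add_sum hdiag hlower i j
  rw [one_apply_ne hij.ne, zero_add] at hA
  by_cases hzero : ZeroPair B i j
  · rw [hA, sum_eq_zero fun m hm => by rw [hzero m (mem_Icc.mp hm).1, mul_zero]]
    simp
  obtain ⟨L, hsign, hL⟩ : ∃ L, s i * s j = (-1) ^ L ∧ 0 ≤ (-1) ^ L * B⁻¹ i j := by
    by_cases hunit : UnitPair B i j
    · refine ⟨1, hΓ i j ⟨hij, hunit⟩, ?_⟩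
      rw [hA, sum_eq_single_of_mem 1 (mem_Icc.mpr ⟨le_rfl, by omega⟩) fun m hm hm1 => by
        rw [hunit.2 m (by have := (mem_Icc.mp hm).1; omega), mul_zero]]
      simpa [one_apply_ne hij.ne] using hupper i j hij
    have hΓN : ∀ x y, 1 ≤ (B - 1) x y → (∀ r, 2 ≤ r → ((B - 1) ^ r) x y = 0) →
        s x * s y = -1 := fun x y h hr => by
      have hxy := hlt x y (by omega)
      exact hΓ x y ⟨hxy, by simpa [one_apply_ne hxy.ne] using h, hr⟩
    obtain ⟨m, hm1, hm⟩ : ∃ m, 1 ≤ m ∧ ((B - 1) ^ m) i j ≠ 0 := by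
      simpa [ZeroPair] using hzero
    obtain ⟨L, hmL, hLn, hL, hmax⟩ := exists_longest_of_pow_apply_ne_zero hlt hm
    refine ⟨L, mul_eq_neg_one_pow_of_longest hN hsq hΓN (one_le_pow_apply_of_ne_zero hN hL)
      hmax, ?_⟩
    rw [hA]
    exact neg_one_pow_mul_alternating_sum_nonneg (fun m _ => pow_apply_nonneg hN m i j)
      (mem_Icc.mpr ⟨by omega, hLn⟩) (one_le_pow_apply_of_ne_zero hN hL)
      (hpaths i j ⟨hij, hzero, hunit, hcomp⟩)
  calc 0 ≤ (-1) ^ L * B⁻¹ i j := hL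
    _ = s i * B⁻¹ i j * s j := by rw [← hsign]; ring

theorem signed_inv_apply_nonneg (hdiag : ∀ i, B i i = 1) (hlower : ∀ i j, j < i → B i j = 0)
    (hupper : ∀ i j, i < j → 0 ≤ B i j) (hsq : ∀ x, s x * s x = 1)
    (hΓ : ∀ i j, GammaEdge B i j → s i * s j = -1)
    (hpaths : ∀ i j, PrimePair B i j → ∑ m ∈ Icc 1 n, ((B - 1) ^ m) i j ≤ 2) (i j : Fin n) :
    0 ≤ s i * B⁻¹ i j * s j := by
  rcases lt_trichotomy i j with hij | rfl | hji
  · by_cases hcomp : CompositePair B i j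
    · obtain ⟨v, hiv, hvj, hz⟩ := hcomp
      have := mul_nonneg (signed_inv_apply_nonneg hdiag hlower hupper hsq hΓ hpaths i v)
        (signed_inv_apply_nonneg hdiag hlower hupper hsq hΓ hpaths v j)
      rw [inv_apply_eq_mul_of_vertexDelete hdiag hlower hiv.ne hij.ne hz]
      linear_combination this + (s i * B⁻¹ i v * B⁻¹ v j * s j) * hsq v
    · exact signed_inv_apply_nonneg_of_not_compositePair hdiag hlower hupper hsq hΓ hpaths hij
        hcomp
  · rw [inv_apply_eq_one_apply_add_sum hdiag hlower,
      sum_pow_apply_eq_zero_of_le hdiag hlower le_rfl, one_apply_eq, add_zero, mul_one, hsq]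
    exact zero_le_one
  · rw [inv_apply_eq_one_apply_add_sum hdiag hlower,
      sum_pow_apply_eq_zero_of_le hdiag hlower hji.le, one_apply_ne hji.ne', add_zero, mul_zero,
      zero_mul]
termination_by (j : ℕ) - i
decreasing_by all_goals omega

end Signing

theorem stmt13_general {n : ℕ} (B : Matrix (Fin n) (Fin n) ℤ)
    (h1 : ∀ i, B i i = 1) (h2 : ∀ i j : Fin n, j < i → B i j = 0)
    (h3 : ∀ i j : Fin n, i < j → 0 ≤ B i j)
    (hbip : GammaBipartite B)
    (hpaths : ∀ i j : Fin n, PrimePair B i j →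
      (∑ m ∈ Finset.Icc 1 n, ((B - 1) ^ m) i j) ≤ 2) :
    IsSignable B⁻¹ := by
  obtain ⟨c, hc⟩ := hbip
  let s : Fin n → ℤ := fun x => if c x then 1 else -1
  have hs : ∀ x, s x = 1 ∨ s x = -1 := fun x => by by_cases h : c x <;> simp [s, h]
  have hsq : ∀ x, s x * s x = 1 := fun x => by rcases hs x with h | h <;> simp [h]
  have hΓ : ∀ i j, GammaEdge B i j → s i * s j = -1 := fun i j h => by
    have := hc i j h
    cases hi : c i <;> cases hj : c j <;> simp_all [s]
  exact ⟨s, hs, fun i j => mul_mul_eq_abs_of_nonneg (hs i) (hs j)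
    (signed_inv_apply_nonneg h1 h2 h3 hsq hΓ hpaths i j)⟩

/-- If `Γ_D` is bipartite and for every prime pair `(i,j)` of `D` the
total number of directed paths from `i` to `j`, namely `∑_(m ≥ 1) ((B-I)^m) i j`
(the terms with `m ≥ n` all vanish by nilpotency), is at most `2`, then `B` is
signable. -/
theorem stmt13 {n : ℕ} (hn : 1 ≤ n) (B : Matrix (Fin n) (Fin n) ℤ)
    (h1 : ∀ i, B i i = 1) (h2 : ∀ i j : Fin n, j < i → B i j = 0)
    (h3 : ∀ i j : Fin n, i < j → 0 ≤ B i j)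
    (hbip : GammaBipartite B)
    (hpaths : ∀ i j : Fin n, PrimePair B i j →
      (∑ m ∈ Finset.Icc 1 n, ((B - 1) ^ m) i j) ≤ 2) :
    IsSignable B⁻¹ :=
  stmt13_general B h1 h2 h3 hbip hpaths
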